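/- Let (X,d) be a finite nonempty ultrametric space and let Δ(X,d) denote the number of open balls of (X,d) that are not centered spheres of (X,d). Then every UGVL-extension (Y,ρ) of (X,d) satisfies card Y ≥ Δ(X,d) + card X. -/

import Mathlib

/-- `d` is an ultrametric on `X`: a nonnegative, symmetric function vanishing
exactly on the diagonal and satisfying the strong triangle inequality. -/
def IsUltrametricOn {X : Type*} (d : X → X → ℝ) : Prop :=
  (∀ x y, 0 ≤ d x y) ∧ (∀ x y, d x y = d y x) ∧
  (∀ x y, d x y = 0 ↔ x = y) ∧
  (∀ x y z, d x y ≤ max (d x z) (d z y))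

/-- `B` is an open ball of the space `(X, d)`. -/
def IsOpenBallOf {X : Type*} (d : X → X → ℝ) (B : Set X) : Prop :=
  ∃ c : X, ∃ r : ℝ, 0 < r ∧ B = {x | d c x < r}

/-- `C` is a centered sphere of the space `(X, d)`. -/
def IsCenteredSphereOf {X : Type*} (d : X → X → ℝ) (C : Set X) : Prop :=
  ∃ c ∈ C, ∃ r : ℝ, 0 ≤ r ∧ C = {x | d x c = r} ∪ {c}

/-- The diameter `sup {d x y : x, y ∈ A}` of a subset `A` of `(X, d)`. -/
noncomputable def setDiam {X : Type*} (d : X → X → ℝ) (A : Set X) : ℝ :=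
  sSup {r | ∃ x ∈ A, ∃ y ∈ A, r = d x y}

/-- A space is locally finite if all of its open balls are finite sets. -/
def IsLocallyFiniteOn {X : Type*} (d : X → X → ℝ) : Prop :=
  ∀ B : Set X, IsOpenBallOf d B → B.Finite

/-- The maximum of the (nonnegative) labels of the vertices of a walk `p`. -/
def walkMax {X : Type*} {T : SimpleGraph X} (l : X → ℝ) {u v : X} (p : T.Walk u v) : ℝ :=
  (p.support.map l).foldr max 0

/-- The function `d` is generated by the tree `T` with nonnegative vertex labeling `l`,
i.e. `d u u = 0` and, for `u ≠ v`, `d u v` is the maximum of the labels of the vertices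
on the (unique) path joining `u` and `v` in `T`. -/
def GeneratedBy {X : Type*} (d : X → X → ℝ) (T : SimpleGraph X) (l : X → ℝ) : Prop :=
  T.IsTree ∧ (∀ x, 0 ≤ l x) ∧ (∀ u, d u u = 0) ∧
  ∀ u v : X, u ≠ v → ∀ p : T.Walk u v, p.IsPath → d u v = walkMax l p

/-- `(X, d)` belongs to the class UGVL: it is generated by some labeled tree. -/
def IsUGVL {X : Type*} (d : X → X → ℝ) : Prop :=
  ∃ (T : SimpleGraph X) (l : X → ℝ), GeneratedBy d T l


/-! In a tree-generated ultrametric space, a finite open ball `B` is a centered sphere about a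
vertex `p` of maximal label in `B`: any two vertices of `B` are joined by a path inside `B`, so
every point of `B` other than `p` lies at distance exactly `l p` from `p`. Given a UGVL-extension
`Φ : X → Y`, lift each open ball `B_r(c)` of `X` that is not a centered sphere to the ball
`B_r(Φ c)` of `Y`. Its center `p` cannot lie in `Φ(X)`, since otherwise `B` would be a centered
sphere about `Φ⁻¹ p`, and `p` determines `B`. Hence the balls of `X` that are not centered
spheres inject into `Y \ Φ(X)`. -/

open Function

lemma List.foldr_max_zero_le_iff {L : List ℝ} {M : ℝ} :
    L.foldr max 0 ≤ M ↔ 0 ≤ M ∧ ∀ a ∈ L, a ≤ M := by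
  induction L with
  | nil => simp
  | cons b t ih => simp only [List.foldr_cons, max_le_iff, ih, List.forall_mem_cons]; tauto

section walkMax

variable {Y : Type*} {T : SimpleGraph Y} (l : Y → ℝ) {u v : Y}

lemma walkMax_le_iff (p : T.Walk u v) {M : ℝ} :
    walkMax l p ≤ M ↔ 0 ≤ M ∧ ∀ w ∈ p.support, l w ≤ M := by
  simp [walkMax, List.foldr_max_zero_le_iff]

lemma walkMax_nonneg (p : T.Walk u v) : 0 ≤ walkMax l p :=
  ((walkMax_le_iff l p).1 le_rfl).1

lemma le_walkMax (p : T.Walk u v) {w : Y} (hw : w ∈ p.support) : l w ≤ walkMax l p :=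
  ((walkMax_le_iff l p).1 le_rfl).2 w hw

lemma walkMax_le_walkMax {u' v' : Y} {p : T.Walk u v} {q : T.Walk u' v'}
    (h : p.support ⊆ q.support) : walkMax l p ≤ walkMax l q :=
  (walkMax_le_iff l p).2 ⟨walkMax_nonneg l q, fun _ hw ↦ le_walkMax l q (h hw)⟩

end walkMax

namespace IsUltrametricOn

variable {X : Type*} {d : X → X → ℝ}

lemma dist_self (hd : IsUltrametricOn d) (x : X) : d x x = 0 := (hd.2.2.1 x x).2 rfl

lemma mem_ball_self (hd : IsUltrametricOn d) (c : X) {r : ℝ} (hr : 0 < r) :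
    c ∈ {y | d c y < r} := by
  simpa [hd.dist_self] using hr

lemma ball_subset_ball_of_mem (hd : IsUltrametricOn d) {c x : X} {r r' : ℝ} (hx : d c x < r)
    (hr : r ≤ r') : {y | d c y < r} ⊆ {y | d x y < r'} := fun y hy ↦
  calc d x y ≤ max (d x c) (d c y) := hd.2.2.2 x y c
    _ < r' := max_lt (by rw [hd.2.1]; linarith) (lt_of_lt_of_le hy hr)

/-- The smaller ball contains `c₁`, which pins down both sphere radii as `d c₁ p`. -/
lemma ball_eq_ball_of_centeredSphere (hd : IsUltrametricOn d) {c₁ c₂ p : X} {r₁ r₂ s₁ s₂ : ℝ}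
    (hr₁ : 0 < r₁) (hr₂ : 0 < r₂) (hc₁ : c₁ ≠ p) (hc₂ : c₂ ≠ p)
    (h₁ : {y | d c₁ y < r₁} = {y | d y p = s₁} ∪ {p})
    (h₂ : {y | d c₂ y < r₂} = {y | d y p = s₂} ∪ {p}) :
    {y | d c₁ y < r₁} = {y | d c₂ y < r₂} := by
  wlog hr : r₁ ≤ r₂ generalizing c₁ c₂ r₁ r₂ s₁ s₂
  · exact (this hr₂ hr₁ hc₂ hc₁ h₂ h₁ (le_of_not_ge hr)).symm
  have hp₁ : p ∈ {y | d c₁ y < r₁} := h₁ ▸ Set.mem_union_right _ rfl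
  have hp₂ : p ∈ {y | d c₂ y < r₂} := h₂ ▸ Set.mem_union_right _ rfl
  have hsub : {y | d c₁ y < r₁} ⊆ {y | d c₂ y < r₂} :=
    (hd.ball_subset_ball_of_mem hp₁ hr).trans <|
      hd.ball_subset_ball_of_mem (by rwa [hd.2.1]) le_rfl
  have hc₁mem := hd.mem_ball_self c₁ hr₁
  have hs₁ : d c₁ p = s₁ := by simpa [h₁, hc₁] using hc₁mem
  have hs₂ : d c₁ p = s₂ := by simpa [h₂, hc₁] using hsub hc₁mem
  rw [h₁, h₂, ← hs₁, ← hs₂]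

end IsUltrametricOn

namespace GeneratedBy

variable {Y : Type*} {ρ : Y → Y → ℝ} {T : SimpleGraph Y} {l : Y → ℝ}

lemma exists_isPath (h : GeneratedBy ρ T l) (u v : Y) : ∃ p : T.Walk u v, p.IsPath :=
  h.1.connected.preconnected.exists_isPath u v

lemma dist_le_walkMax (h : GeneratedBy ρ T l) {u v : Y} (p : T.Walk u v) :
    ρ u v ≤ walkMax l p := by
  classical
  by_cases huv : u = v
  · subst huv
    rw [h.2.2.1]
    exact walkMax_nonneg l p
  · rw [h.2.2.2 u v huv _ p.bypass_isPath]
    exact walkMax_le_walkMax l p.support_bypass_subset_support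

lemma label_le_dist (h : GeneratedBy ρ T l) {u v : Y} (huv : u ≠ v) : l u ≤ ρ u v := by
  obtain ⟨p, hp⟩ := h.exists_isPath u v
  rw [h.2.2.2 u v huv p hp]
  exact le_walkMax l p p.start_mem_support

lemma dist_le_of_mem_support (h : GeneratedBy ρ T l) {u v w : Y} {p : T.Walk u v}
    (hp : p.IsPath) (hw : w ∈ p.support) : ρ u w ≤ ρ u v := by
  classical
  by_cases huv : u = v
  · subst huv
    rw [(SimpleGraph.Walk.isPath_iff_nil.1 hp).eq_nil, SimpleGraph.Walk.support_nil,
      List.mem_singleton] at hw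
    rw [hw]
  · calc ρ u w ≤ walkMax l (p.takeUntil w hw) := h.dist_le_walkMax _
      _ ≤ walkMax l p := walkMax_le_walkMax l (p.support_takeUntil_subset_support hw)
      _ = ρ u v := (h.2.2.2 u v huv p hp).symm

/-- Joining `y` to `p` through `c` gives a walk inside the ball. -/
lemma dist_le_label_of_forall_le (h : GeneratedBy ρ T l) {c p y : Y} {r : ℝ}
    (hmax : ∀ z ∈ {z | ρ c z < r}, l z ≤ l p) (hp : ρ c p < r) (hy : ρ c y < r) :
    ρ y p ≤ l p := by
  obtain ⟨q₁, hq₁⟩ := h.exists_isPath c y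
  obtain ⟨q₂, hq₂⟩ := h.exists_isPath c p
  refine (h.dist_le_walkMax (q₁.reverse.append q₂)).trans ((walkMax_le_iff l _).2 ⟨h.2.1 p, ?_⟩)
  intro w hw
  apply hmax
  rw [SimpleGraph.Walk.mem_support_append_iff, SimpleGraph.Walk.support_reverse,
    List.mem_reverse] at hw
  rcases hw with hw | hw
  · exact (h.dist_le_of_mem_support hq₁ hw).trans_lt hy
  · exact (h.dist_le_of_mem_support hq₂ hw).trans_lt hp

theorem isCenteredSphereOf_ball (h : GeneratedBy ρ T l) (hρ : IsUltrametricOn ρ) (c : Y)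
    {r : ℝ} (hr : 0 < r) (hfin : {y | ρ c y < r}.Finite) :
    IsCenteredSphereOf ρ {y | ρ c y < r} := by
  obtain ⟨p, hp, hmax⟩ := Set.exists_max_image _ l hfin ⟨c, hρ.mem_ball_self c hr⟩
  by_cases hsingle : ∀ y ∈ {y | ρ c y < r}, y = p
  · refine ⟨p, hp, 0, le_rfl, Set.ext fun y ↦ ⟨fun hy ↦ Or.inr (hsingle y hy), ?_⟩⟩
    rintro (hy | rfl)
    · rwa [(hρ.2.2.1 y p).1 hy]
    · exact hp
  push Not at hsingle
  obtain ⟨y₀, hy₀, hy₀p⟩ := hsingle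
  have hlr : l p < r := calc
    l p ≤ ρ p y₀ := h.label_le_dist hy₀p.symm
    _ ≤ max (ρ p c) (ρ c y₀) := hρ.2.2.2 p y₀ c
    _ < r := max_lt (by rwa [hρ.2.1]) hy₀
  refine ⟨p, hp, l p, h.2.1 p, Set.ext fun y ↦ ⟨fun hy ↦ ?_, ?_⟩⟩
  · by_cases hyp : y = p
    · exact Or.inr hyp
    · refine Or.inl (le_antisymm (h.dist_le_label_of_forall_le hmax hp hy) ?_)
      exact (h.label_le_dist (Ne.symm hyp)).trans_eq (hρ.2.1 p y)
  · rintro (hy | rfl)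
    · exact hρ.ball_subset_ball_of_mem (by rwa [hρ.2.1]) le_rfl
        (show ρ p y < r from ((hρ.2.1 p y).trans hy).trans_lt hlr)
    · exact hp

end GeneratedBy

def nonSphereBalls {X : Type*} (d : X → X → ℝ) : Set (Set X) :=
  {B | IsOpenBallOf d B ∧ ¬ IsCenteredSphereOf d B}

section Extension

variable {X Y : Type*} {d : X → X → ℝ} {ρ : Y → Y → ℝ} {Φ : X → Y}

lemma injective_of_forall_dist_eq (hd : IsUltrametricOn d) (hρ : IsUltrametricOn ρ)
    (hΦ : ∀ x y, ρ (Φ x) (Φ y) = d x y) : Injective Φ := fun x y hxy ↦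
  (hd.2.2.1 x y).1 (by rw [← hΦ, hxy, hρ.dist_self])

lemma IsCenteredSphereOf.preimage (hΦinj : Injective Φ) (hΦ : ∀ x y, ρ (Φ x) (Φ y) = d x y)
    {C : Set Y} {q : X} {s : ℝ} (hq : Φ q ∈ C) (hs : 0 ≤ s)
    (hC : C = {y | ρ y (Φ q) = s} ∪ {Φ q}) : IsCenteredSphereOf d (Φ ⁻¹' C) :=
  ⟨q, hq, s, hs, by ext x; simp [hC, hΦ, hΦinj.eq_iff]⟩

theorem exists_injective_nonSphereBalls_notMem_range [Finite Y]
    (hd : IsUltrametricOn d) (hρ : IsUltrametricOn ρ) (hY : IsUGVL ρ)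
    (hΦ : ∀ x y, ρ (Φ x) (Φ y) = d x y) :
    ∃ f : nonSphereBalls d → Y, Injective f ∧ ∀ B, f B ∉ Set.range Φ := by
  obtain ⟨T, l, hgen⟩ := hY
  have hΦinj := injective_of_forall_dist_eq hd hρ hΦ
  have hlift : ∀ B : nonSphereBalls d,
      ∃ c r, 0 < r ∧ (B : Set X) = Φ ⁻¹' {y | ρ (Φ c) y < r} := by
    rintro ⟨B, ⟨c, r, hr, rfl⟩, -⟩
    exact ⟨c, r, hr, by ext; simp [hΦ]⟩
  choose c r hr hB using hlift
  choose p hp s hs hC using fun B ↦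
    hgen.isCenteredSphereOf_ball hρ (Φ (c B)) (hr B) (Set.toFinite _)
  have hpΦ : ∀ B, p B ∉ Set.range Φ := by
    rintro B ⟨x, hx⟩
    have hpB := hp B
    have hCB := hC B
    rw [← hx] at hpB hCB
    exact B.2.2 (hB B ▸ IsCenteredSphereOf.preimage hΦinj hΦ hpB (hs B) hCB)
  refine ⟨p, fun B₁ B₂ h ↦ Subtype.ext ?_, hpΦ⟩
  have hC₂ := hC B₂
  rw [← h] at hC₂
  rw [hB B₁, hB B₂, hρ.ball_eq_ball_of_centeredSphere (hr B₁) (hr B₂) (fun h₁ ↦ hpΦ B₁ ⟨_, h₁⟩)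
    (fun h₂ ↦ hpΦ B₂ ⟨_, h₂.trans h⟩) (hC B₁) hC₂]

end Extension

theorem stmt_17_general {X Y : Type*}
    (d : X → X → ℝ) (hd : IsUltrametricOn d)
    (ρ : Y → Y → ℝ) (hρ : IsUltrametricOn ρ) (hY : IsUGVL ρ)
    (Φ : X → Y) (hΦ : ∀ x y : X, ρ (Φ x) (Φ y) = d x y) :
    (({B : Set X | IsOpenBallOf d B ∧ ¬ IsCenteredSphereOf d B}.ncard
        + Nat.card X : ℕ) : Cardinal) ≤ Cardinal.mk Y := by
  obtain hYfin | hYinf := finite_or_infinite Y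
  · have hΦinj := injective_of_forall_dist_eq hd hρ hΦ
    obtain ⟨f, hf, hfΦ⟩ := exists_injective_nonSphereBalls_notMem_range hd hρ hY hΦ
    have := Finite.of_injective f hf
    have := Finite.of_injective Φ hΦinj
    rw [← Nat.cast_card, ← Nat.card_coe_set_eq, ← Nat.card_sum]
    exact_mod_cast Nat.card_le_card_of_injective _ (hf.sumElim hΦinj fun B x h ↦ hfΦ B ⟨x, h.symm⟩)
  · exact Cardinal.natCast_lt_aleph0.le.trans (Cardinal.infinite_iff.1 hYinf)

/-- Any UGVL-extension `(Y, ρ)` of a finite nonempty ultrametric space `(X, d)`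
satisfies `card Y ≥ Δ(X, d) + card X`, where `Δ(X, d)` is the number of open balls of
`(X, d)` that are not centered spheres. -/
theorem stmt_17 {X Y : Type*} [Finite X] (hne : Nonempty X)
    (d : X → X → ℝ) (hd : IsUltrametricOn d)
    (ρ : Y → Y → ℝ) (hρ : IsUltrametricOn ρ) (hY : IsUGVL ρ)
    (Φ : X → Y) (hΦ : ∀ x y : X, ρ (Φ x) (Φ y) = d x y) :
    (({B : Set X | IsOpenBallOf d B ∧ ¬ IsCenteredSphereOf d B}.ncard
        + Nat.card X : ℕ) : Cardinal) ≤ Cardinal.mk Y :=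
  stmt_17_general d hd ρ hρ hY Φ hΦ
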